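/- Let ψ : Fin dA × Fin dB → ℂ be a unit vector. Then the supremum, over all permutations π of Fin dA × Fin dB, all phases φ : Fin dA × Fin dB → ℝ, and all unit vectors a : Fin dA → ℂ, b : Fin dB → ℂ, of |∑_{(i,j)} conj(a(i)·b(j)) · exp(i·φ(i,j)) · ψ(π(i,j))| equals the maximum over permutations π of the ℓ²→ℓ² operator norm of the real matrix (i,j) ↦ |ψ(π(i,j))|. -/

import Mathlib

/-!
With `M` the matrix of moduli of `ψ ∘ π`, the triangle inequality bounds the overlap by
`⟨|a|, M |b|⟩ ≤ ‖M‖`. Conversely, the phases `φ = -arg (ψ ∘ π)` turn the overlap with real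
vectors `a = x`, `b = y` into `⟨x, M y⟩`, which equals `‖M‖` when `y` maximises `‖M y‖` on the
compact unit sphere and `x = M y / ‖M y‖`.
-/

/-- The ℓ²→ℓ² operator norm of a real matrix: the operator norm of the induced
continuous linear map between the corresponding Euclidean spaces (i.e. the largest
singular value). -/
noncomputable def l2OpNormReal {m n : ℕ} (M : Matrix (Fin m) (Fin n) ℝ) : ℝ :=
  ‖LinearMap.toContinuousLinearMap (Matrix.toEuclideanLin M)‖

open Matrix

section InnerProductSpace

variable {E F : Type*} [NormedAddCommGroup E] [InnerProductSpace ℝ E]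
  [NormedAddCommGroup F] [InnerProductSpace ℝ F]

theorem ContinuousLinearMap.exists_norm_eq_one_norm_apply_eq_opNorm
    [FiniteDimensional ℝ E] [Nontrivial E] (T : E →L[ℝ] F) :
    ∃ y : E, ‖y‖ = 1 ∧ ‖T y‖ = ‖T‖ := by
  have hcompact := (isCompact_sphere (0 : E) 1).image (continuous_norm.comp T.continuous)
  obtain ⟨y, hy, hTy⟩ := hcompact.sSup_mem ((NormedSpace.sphere_nonempty.mpr zero_le_one).image _)
  exact ⟨y, mem_sphere_zero_iff_norm.mp hy, hTy.trans T.sSup_sphere_eq_norm⟩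

theorem exists_norm_eq_one_inner_eq_norm [Nontrivial F] (v : F) :
    ∃ x : F, ‖x‖ = 1 ∧ inner ℝ x v = ‖v‖ := by
  rcases eq_or_ne v 0 with rfl | hv
  · obtain ⟨x, hx⟩ := exists_norm_eq F zero_le_one
    exact ⟨x, hx, by simp⟩
  · refine ⟨‖v‖⁻¹ • v, norm_smul_inv_norm hv, ?_⟩
    rw [real_inner_smul_left, real_inner_self_eq_norm_sq, sq,
      inv_mul_cancel_left₀ (norm_ne_zero_iff.mpr hv)]

theorem ContinuousLinearMap.exists_inner_apply_eq_opNorm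
    [FiniteDimensional ℝ E] [Nontrivial E] [Nontrivial F] (T : E →L[ℝ] F) :
    ∃ (x : F) (y : E), ‖x‖ = 1 ∧ ‖y‖ = 1 ∧ inner ℝ x (T y) = ‖T‖ := by
  obtain ⟨y, hy, hTy⟩ := T.exists_norm_eq_one_norm_apply_eq_opNorm
  obtain ⟨x, hx, hxTy⟩ := exists_norm_eq_one_inner_eq_norm (T y)
  exact ⟨x, y, hx, hy, hxTy.trans hTy⟩

end InnerProductSpace

section L2OpNorm

variable {m n : ℕ}

theorem EuclideanSpace.norm_toLp_eq_one_iff {ι : Type*} [Fintype ι] (x : ι → ℝ) :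
    ‖WithLp.toLp 2 x‖ = 1 ↔ ∑ i, x i ^ 2 = 1 := by
  simp [EuclideanSpace.norm_eq, Real.sqrt_eq_one]

theorem inner_toLp_toEuclideanLin_toLp {ι κ : Type*} [Fintype ι] [Fintype κ] [DecidableEq κ]
    (M : Matrix ι κ ℝ) (x : ι → ℝ) (y : κ → ℝ) :
    inner ℝ (WithLp.toLp 2 x) (toEuclideanLin M (WithLp.toLp 2 y)) = x ⬝ᵥ M *ᵥ y := by
  simp [EuclideanSpace.inner_toLp_toLp, toLpLin_toLp, dotProduct_comm]

theorem dotProduct_mulVec_le_l2OpNormReal (M : Matrix (Fin m) (Fin n) ℝ) {x : Fin m → ℝ}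
    {y : Fin n → ℝ} (hx : ∑ i, x i ^ 2 = 1) (hy : ∑ j, y j ^ 2 = 1) :
    x ⬝ᵥ M *ᵥ y ≤ l2OpNormReal M := by
  set T := LinearMap.toContinuousLinearMap (toEuclideanLin M)
  rw [← EuclideanSpace.norm_toLp_eq_one_iff] at hx hy
  calc x ⬝ᵥ M *ᵥ y = inner ℝ (WithLp.toLp 2 x) (T (WithLp.toLp 2 y)) :=
        (inner_toLp_toEuclideanLin_toLp M x y).symm
    _ ≤ ‖WithLp.toLp 2 x‖ * ‖T (WithLp.toLp 2 y)‖ := real_inner_le_norm _ _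
    _ ≤ ‖WithLp.toLp 2 x‖ * (‖T‖ * ‖WithLp.toLp 2 y‖) := by gcongr; exact T.le_opNorm _
    _ = l2OpNormReal M := by rw [hx, hy, one_mul, mul_one, l2OpNormReal]

theorem exists_dotProduct_mulVec_eq_l2OpNormReal [NeZero m] [NeZero n]
    (M : Matrix (Fin m) (Fin n) ℝ) :
    ∃ (x : Fin m → ℝ) (y : Fin n → ℝ), ∑ i, x i ^ 2 = 1 ∧ ∑ j, y j ^ 2 = 1 ∧
      x ⬝ᵥ M *ᵥ y = l2OpNormReal M := by
  obtain ⟨x, y, hx, hy, hxy⟩ :=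
    (LinearMap.toContinuousLinearMap (toEuclideanLin M)).exists_inner_apply_eq_opNorm
  refine ⟨x.ofLp, y.ofLp, ?_, ?_, ?_⟩
  · rwa [← EuclideanSpace.norm_toLp_eq_one_iff, WithLp.toLp_ofLp]
  · rwa [← EuclideanSpace.norm_toLp_eq_one_iff, WithLp.toLp_ofLp]
  · rwa [← inner_toLp_toEuclideanLin_toLp, WithLp.toLp_ofLp, WithLp.toLp_ofLp]

end L2OpNorm

section Overlap

variable {ι κ : Type*} [Fintype ι] [Fintype κ]

open Complex

theorem Complex.exp_neg_arg_mul_I_mul_self (z : ℂ) : exp (↑(-arg z) * I) * z = ‖z‖ := by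
  conv_lhs => rw [← norm_mul_exp_arg_mul_I z]
  rw [mul_left_comm, ← exp_add]
  push_cast
  simp

theorem norm_sum_conj_mul_exp_mul_le (χ : ι × κ → ℂ) (φ : ι × κ → ℝ) (a : ι → ℂ) (b : κ → ℂ) :
    ‖∑ p, starRingEnd ℂ (a p.1 * b p.2) * exp (φ p * I) * χ p‖ ≤
      (fun i => ‖a i‖) ⬝ᵥ of (fun i j => ‖χ (i, j)‖) *ᵥ fun j => ‖b j‖ := by
  refine (norm_sum_le _ _).trans_eq ?_
  simp only [norm_mul, Complex.norm_conj, norm_exp_ofReal_mul_I, Fintype.sum_prod_type,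
    dotProduct, mulVec, of_apply, Finset.mul_sum]
  exact Finset.sum_congr rfl fun i _ => Finset.sum_congr rfl fun j _ => by ring

theorem sum_conj_mul_exp_neg_arg_mul (χ : ι × κ → ℂ) (x : ι → ℝ) (y : κ → ℝ) :
    ∑ p, starRingEnd ℂ (x p.1 * y p.2) * exp (↑(-arg (χ p)) * I) * χ p =
      ↑(x ⬝ᵥ of (fun i j => ‖χ (i, j)‖) *ᵥ y) := by
  simp only [mul_assoc, Complex.exp_neg_arg_mul_I_mul_self, Fintype.sum_prod_type,
    dotProduct, mulVec, of_apply, Finset.mul_sum]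
  push_cast
  refine Finset.sum_congr rfl fun i _ => Finset.sum_congr rfl fun j _ => ?_
  rw [map_mul, Complex.conj_ofReal, Complex.conj_ofReal]
  ring

end Overlap

/-- For a bipartite pure state `ψ`, the supremum over incoherent
unitaries (permutations `π` and phases `φ`) and over product unit vectors
`(i,j) ↦ a i * b j` of the modulus of the overlap
`|∑ (i,j), conj (a i * b j) * exp(I φ (i,j)) * ψ (π (i,j))|`
equals the maximum over permutations `π` of the ℓ²→ℓ² operator norm of the
matrix of moduli `(i,j) ↦ |ψ (π (i,j))|`. -/
theorem sSup_overlap_eq_iSup_opNorm_abs_matrix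
    {dA dB : ℕ} (ψ : Fin dA × Fin dB → ℂ)
    (hψ : ∑ p : Fin dA × Fin dB, ‖ψ p‖ ^ 2 = 1) :
    sSup {r : ℝ | ∃ (π : Equiv.Perm (Fin dA × Fin dB)) (φ : Fin dA × Fin dB → ℝ)
        (a : Fin dA → ℂ) (b : Fin dB → ℂ),
        (∑ i, ‖a i‖ ^ 2 = 1) ∧ (∑ j, ‖b j‖ ^ 2 = 1) ∧
        r = ‖(∑ p : Fin dA × Fin dB,
          (starRingEnd ℂ) (a p.1 * b p.2) * Complex.exp ((φ p : ℂ) * Complex.I) * ψ (π p))‖} =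
      ⨆ π : Equiv.Perm (Fin dA × Fin dB),
        l2OpNormReal (Matrix.of fun i j => ‖ψ (π (i, j))‖) := by
  obtain ⟨⟨i₀, j₀⟩⟩ : Nonempty (Fin dA × Fin dB) := by
    by_contra h
    simp [not_nonempty_iff.mp h] at hψ
  have : NeZero dA := NeZero.of_pos i₀.pos
  have : NeZero dB := NeZero.of_pos j₀.pos
  refine csSup_eq_csSup_of_forall_exists_le ?_ ?_
  · rintro r ⟨π, φ, a, b, ha, hb, rfl⟩
    exact ⟨_, ⟨π, rfl⟩, (norm_sum_conj_mul_exp_mul_le (fun p => ψ (π p)) φ a b).trans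
      (dotProduct_mulVec_le_l2OpNormReal _ ha hb)⟩
  · rintro _ ⟨π, rfl⟩
    obtain ⟨x, y, hx, hy, hxy⟩ :=
      exists_dotProduct_mulVec_eq_l2OpNormReal (Matrix.of fun i j => ‖ψ (π (i, j))‖)
    refine ⟨_, ⟨π, fun p => -Complex.arg (ψ (π p)), fun i => x i, fun j => y j,
      by simpa using hx, by simpa using hy, rfl⟩, ?_⟩
    rw [sum_conj_mul_exp_neg_arg_mul (fun p => ψ (π p)), hxy, Complex.norm_real]
    exact le_abs_self _
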